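/- Let M > m > 1, C₀, C₁ > 0. Let B : ℝ → ℝ be measurable with 0 < B₋ ≤ B(t) ≤ B₊ a.e. and B₊ − B(x) ≤ C₁(1+x²)^{−M/2} for all x ∈ ℝ, let b(x) := ∫₀ˣ B(t) dt with inverse b⁻¹. Let V : ℝ² → [0,∞) be measurable with V(x,ξ) ≤ C₀(1+x²+ξ²)^{−m/2} for all (x,ξ), fix ε > 0 and a continuous χ_ε : ℝ → [0,1] with χ_ε = 0 on (−∞,−2ε] and χ_ε = 1 on [−ε,∞), and set V_ε(x,ξ) := χ_ε(x)V(x,ξ), Ṽ_ε(x,ξ) := V_ε(b⁻¹(x),−ξ). Assume there are c > 0, λ₀ > 0 with N(λ,V,0) ≥ c·λ^{−2/m} for 0 < λ < λ₀. Then: (i) there exist c' > 0 and λ₁ > 0 such that N(λ,Ṽ_ε) ≥ c'·λ^{−2/m} for all 0 < λ < λ₁, and (ii) lim_{λ↓0} B₊·N(λ,V,0)/N(λ,Ṽ_ε) = 1. -/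

import Mathlib

open MeasureTheory Filter Topology

section auxstmt13
open Set

section aux
variable {B : ℝ → ℝ} {Bm Bp : ℝ}

lemma aux_intInt (hB : Measurable B) (hBm : 0 < Bm)
    (hbound : ∀ᵐ t : ℝ ∂volume, Bm ≤ B t ∧ B t ≤ Bp)
    (a c : ℝ) : IntervalIntegrable B volume a c := by
  rw [intervalIntegrable_iff]
  have : IsFiniteMeasure (volume.restrict (Set.uIoc a c)) :=
    ⟨by rw [Measure.restrict_apply_univ]; exact measure_Ioc_lt_top⟩
  refine Integrable.mono' (integrable_const Bp) hB.aestronglyMeasurable.restrict ?_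
  refine ae_restrict_of_ae (hbound.mono fun t ht => ?_)
  rw [Real.norm_eq_abs, abs_of_nonneg (le_trans hBm.le ht.1)]; exact ht.2

lemma aux_b_sub {b : ℝ → ℝ} (hB : Measurable B) (hBm : 0 < Bm)
    (hbound : ∀ᵐ t : ℝ ∂volume, Bm ≤ B t ∧ B t ≤ Bp)
    (hb : ∀ x, b x = ∫ t in (0:ℝ)..x, B t) (x y : ℝ) :
    b y - b x = ∫ t in x..y, B t := by
  rw [hb, hb, intervalIntegral.integral_interval_sub_left
    (aux_intInt hB hBm hbound 0 y) (aux_intInt hB hBm hbound 0 x)]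

lemma aux_b_mono {b : ℝ → ℝ} (hB : Measurable B) (hBm : 0 < Bm)
    (hbound : ∀ᵐ t : ℝ ∂volume, Bm ≤ B t ∧ B t ≤ Bp)
    (hb : ∀ x, b x = ∫ t in (0:ℝ)..x, B t) : StrictMono b := by
  intro x y hxy
  have h1 := aux_b_sub hB hBm hbound hb x y
  have h2 : Bm * (y - x) ≤ ∫ t in x..y, B t := by
    calc Bm * (y - x) = ∫ _t in x..y, Bm := by
          rw [intervalIntegral.integral_const, smul_eq_mul]; ring
      _ ≤ _ := intervalIntegral.integral_mono_ae hxy.le intervalIntegrable_const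
          (aux_intInt hB hBm hbound x y) (hbound.mono fun t ht => ht.1)
  nlinarith [mul_pos hBm (sub_pos.mpr hxy)]

end aux

section aux2
variable {B b β : ℝ → ℝ} {Bm Bp : ℝ}

lemma aux_beta_cont (hmono : StrictMono b) (hβ₁ : ∀ k, b (β k) = k) : Continuous β := by
  have hsurj : Function.Surjective b := fun k => ⟨β k, hβ₁ k⟩
  let e := StrictMono.orderIsoOfSurjective b hmono hsurj
  have : β = ⇑e.symm := by
    funext k
    have h1 : b (e.symm k) = k := e.apply_symm_apply k
    exact hmono.injective (by rw [hβ₁, h1])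
  rw [this]
  exact e.symm.continuous

lemma aux_map_beta (hB : Measurable B) (hBm : 0 < Bm)
    (hbound : ∀ᵐ t : ℝ ∂volume, Bm ≤ B t ∧ B t ≤ Bp)
    (hb : ∀ x, b x = ∫ t in (0:ℝ)..x, B t)
    (hβ₁ : ∀ k, b (β k) = k) :
    Measure.map β volume = volume.withDensity (fun y => ENNReal.ofReal (B y)) := by
  have hmono := aux_b_mono hB hBm hbound hb
  have hβc := aux_beta_cont hmono hβ₁
  have hmap : ∀ a c : ℝ, Measure.map β volume (Ioc a c) = ENNReal.ofReal (b c - b a) := by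
    intro a c
    rw [Measure.map_apply hβc.measurable measurableSet_Ioc]
    have : β ⁻¹' Ioc a c = Ioc (b a) (b c) := by
      ext x
      simp only [mem_preimage, mem_Ioc]
      rw [← hmono.lt_iff_lt, ← hmono.le_iff_le, hβ₁]
    rw [this, Real.volume_Ioc]
  refine Measure.ext_of_Ioc' _ _ (fun a c _ => ?_) (fun a c hac => ?_)
  · rw [hmap]; exact ENNReal.ofReal_ne_top
  · rw [hmap, withDensity_apply _ measurableSet_Ioc]
    have hint : IntegrableOn B (Ioc a c) volume := by
      rw [← intervalIntegrable_iff_integrableOn_Ioc_of_le hac.le]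
      exact aux_intInt hB hBm hbound a c
    rw [← ofReal_integral_eq_lintegral_ofReal hint
      (ae_restrict_of_ae (hbound.mono fun t ht => le_trans hBm.le ht.1))]
    congr 1
    rw [aux_b_sub hB hBm hbound hb a c, intervalIntegral.integral_of_le hac.le]

lemma aux_map_S (hB : Measurable B) (hBm : 0 < Bm)
    (hbound : ∀ᵐ t : ℝ ∂volume, Bm ≤ B t ∧ B t ≤ Bp)
    (hb : ∀ x, b x = ∫ t in (0:ℝ)..x, B t)
    (hβ₁ : ∀ k, b (β k) = k) :
    Measure.map (fun p : ℝ × ℝ => (β p.1, -p.2)) volume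
      = (volume.withDensity (fun y => ENNReal.ofReal (B y))).prod volume := by
  have hβc := aux_beta_cont (aux_b_mono hB hBm hbound hb) hβ₁
  have h1 : (fun p : ℝ × ℝ => (β p.1, -p.2)) = Prod.map β (Neg.neg : ℝ → ℝ) := rfl
  rw [h1, Measure.volume_eq_prod ℝ ℝ, ← Measure.map_prod_map _ _ hβc.measurable measurable_neg,
    aux_map_beta hB hBm hbound hb hβ₁, Measure.map_neg_eq_self]

lemma aux_Q_eq {A : Set (ℝ × ℝ)} (hA : MeasurableSet A)
    (hB : Measurable B) (hBm : 0 < Bm)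
    (hbound : ∀ᵐ t : ℝ ∂volume, Bm ≤ B t ∧ B t ≤ Bp)
    (hb : ∀ x, b x = ∫ t in (0:ℝ)..x, B t)
    (hβ₁ : ∀ k, b (β k) = k) :
    volume ((fun p : ℝ × ℝ => (β p.1, -p.2)) ⁻¹' A)
      = ∫⁻ x, ENNReal.ofReal (B x) * volume (Prod.mk x ⁻¹' A) := by
  have hβc := aux_beta_cont (aux_b_mono hB hBm hbound hb) hβ₁
  have hS : Measurable (fun p : ℝ × ℝ => (β p.1, -p.2)) :=
    (hβc.measurable.comp measurable_fst).prodMk measurable_snd.neg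
  rw [← Measure.map_apply hS hA, aux_map_S hB hBm hbound hb hβ₁,
    Measure.prod_apply hA,
    lintegral_withDensity_eq_lintegral_mul _ (hB.ennreal_ofReal)
      (measurable_measure_prodMk_left hA)]
  rfl

lemma aux_vol_eq {A : Set (ℝ × ℝ)} (hA : MeasurableSet A) :
    volume A = ∫⁻ x, volume (Prod.mk x ⁻¹' A) := by
  rw [Measure.volume_eq_prod ℝ ℝ, Measure.prod_apply hA]

end aux2

lemma aux_K_fin {M C₁ : ℝ} (hM : 1 < M) (hC₁ : 0 < C₁) :
    ∫⁻ x : ℝ, ENNReal.ofReal (C₁ * (1 + x ^ 2) ^ (-(M / 2))) < ⊤ := by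
  have hint : Integrable (fun x : ℝ => C₁ * (1 + x ^ 2) ^ (-(M / 2))) volume := by
    have h0 : Integrable (fun x : ℝ => ((1 : ℝ) + ‖x‖ ^ 2) ^ (-M / 2)) volume := by
      apply integrable_rpow_neg_one_add_norm_sq
      simpa using hM
    have h1 : (fun x : ℝ => C₁ * (1 + x ^ 2) ^ (-(M / 2)))
        = fun x : ℝ => C₁ * ((1 : ℝ) + ‖x‖ ^ 2) ^ (-M / 2) := by
      funext x; rw [Real.norm_eq_abs, sq_abs, neg_div]
    rw [h1]
    exact h0.const_mul C₁
  have hnn : 0 ≤ᵐ[volume] fun x : ℝ => C₁ * (1 + x ^ 2) ^ (-(M / 2)) :=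
    Eventually.of_forall fun x => by positivity
  exact (hasFiniteIntegral_iff_ofReal hnn).mp hint.hasFiniteIntegral

lemma aux_mem_Ioo {ρ y : ℝ} (hρ : 0 < ρ) (h : y ^ 2 < ρ ^ 2) : y ∈ Ioo (-ρ) ρ :=
  ⟨by nlinarith, by nlinarith⟩

lemma aux_sq_lt {C₀ m lam y η : ℝ} (hC₀ : 0 < C₀) (hm : 0 < m) (hlam : 0 < lam)
    (h : lam < C₀ * (1 + y ^ 2 + η ^ 2) ^ (-(m / 2))) :
    y ^ 2 < ((C₀ / lam) ^ (1 / m)) ^ 2 ∧ η ^ 2 < ((C₀ / lam) ^ (1 / m)) ^ 2 := by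
  set t : ℝ := 1 + y ^ 2 + η ^ 2 with ht
  have htpos : (0 : ℝ) < t := by positivity
  have h2 : t ^ (m / 2) < C₀ / lam := by
    have hne : t ^ (m / 2) ≠ 0 := by positivity
    rw [Real.rpow_neg htpos.le] at h
    rw [lt_div_iff₀ hlam, mul_comm]
    have h' := mul_lt_mul_of_pos_right h (show (0:ℝ) < t ^ (m/2) by positivity)
    rwa [mul_assoc, inv_mul_cancel₀ hne, mul_one] at h'
  have h3 : t < ((C₀ / lam) ^ (1 / m)) ^ 2 := by
    have e1 : ((C₀ / lam) ^ (1 / m)) ^ 2 = (C₀ / lam) ^ (2 / m) := by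
      rw [← Real.rpow_natCast ((C₀ / lam) ^ (1 / m)) 2,
        ← Real.rpow_mul (by positivity : (0:ℝ) ≤ C₀ / lam)]
      norm_num
      rw [mul_comm]
      congr 1
    have e2 : t = (t ^ (m / 2)) ^ (2 / m) := by
      rw [← Real.rpow_mul htpos.le]
      rw [show m / 2 * (2 / m) = 1 by field_simp, Real.rpow_one]
    rw [e1, e2]
    exact Real.rpow_lt_rpow (by positivity) h2 (by positivity)
  constructor <;> nlinarith [sq_nonneg y, sq_nonneg η]
end auxstmt13

/-- The volume function `N(λ, V, s) = (2π)⁻¹ vol{(x,ξ) : V(x,ξ) > λ, x > s}`. -/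
noncomputable def volN (V : ℝ → ℝ → ℝ) (s lam : ℝ) : ℝ :=
  (2 * Real.pi)⁻¹ * (volume {p : ℝ × ℝ | V p.1 p.2 > lam ∧ p.1 > s}).toReal

/-- The volume function `N(λ, a) = (2π)⁻¹ vol{(x,ξ) : a(x,ξ) > λ}`. -/
noncomputable def volNa (a : ℝ → ℝ → ℝ) (lam : ℝ) : ℝ :=
  (2 * Real.pi)⁻¹ * (volume {p : ℝ × ℝ | a p.1 p.2 > lam}).toReal

open Set

/-- Under the power-like decay of `V` and `B₊ − B(x) ≤ C₁⟨x⟩^{−M}` with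
`M > m > 1`, and the lower bound `N(λ,V,0) ≥ c λ^{−2/m}`, the function
`Ṽ_ε(x,ξ) = χ_ε(b⁻¹(x))V(b⁻¹(x),−ξ)` satisfies (i) `N(λ,Ṽ_ε) ≥ c' λ^{−2/m}` near `0` and
(ii) `lim_{λ↓0} B₊ N(λ,V,0)/N(λ,Ṽ_ε) = 1`. -/
theorem stmt_13 (M m C₀ C₁ : ℝ) (hMm : m < M) (hm : 1 < m)
    (hC₀ : 0 < C₀) (hC₁ : 0 < C₁)
    (B : ℝ → ℝ) (hB : Measurable B) (Bm Bp : ℝ)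
    (hBm : 0 < Bm) (hBmp : Bm ≤ Bp)
    (hbound : ∀ᵐ t : ℝ ∂volume, Bm ≤ B t ∧ B t ≤ Bp)
    (hBdecay : ∀ x : ℝ, Bp - B x ≤ C₁ * (1 + x ^ 2) ^ (-(M / 2)))
    (b β : ℝ → ℝ) (hb : ∀ x, b x = ∫ t in (0:ℝ)..x, B t)
    (hβ₁ : ∀ k, b (β k) = k) (hβ₂ : ∀ x, β (b x) = x)
    (V : ℝ → ℝ → ℝ) (hVmeas : Measurable (fun p : ℝ × ℝ => V p.1 p.2))
    (hVnn : ∀ x ξ : ℝ, 0 ≤ V x ξ)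
    (hVbd : ∀ x ξ : ℝ, V x ξ ≤ C₀ * (1 + x ^ 2 + ξ ^ 2) ^ (-(m / 2)))
    (ε : ℝ) (hε : 0 < ε) (χ : ℝ → ℝ) (hχc : Continuous χ)
    (hχ01 : ∀ x, 0 ≤ χ x ∧ χ x ≤ 1)
    (hχ0 : ∀ x, x ≤ -2 * ε → χ x = 0) (hχ1 : ∀ x, -ε ≤ x → χ x = 1)
    (hlow : ∃ c > (0:ℝ), ∃ lam₀ > (0:ℝ), ∀ lam : ℝ, 0 < lam → lam < lam₀ →
      c * lam ^ (-(2 / m)) ≤ volN V 0 lam) :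
    (∃ c' > (0:ℝ), ∃ lam₁ > (0:ℝ), ∀ lam : ℝ, 0 < lam → lam < lam₁ →
        c' * lam ^ (-(2 / m)) ≤ volNa (fun x ξ => χ (β x) * V (β x) (-ξ)) lam) ∧
      Tendsto (fun lam => Bp * volN V 0 lam / volNa (fun x ξ => χ (β x) * V (β x) (-ξ)) lam)
        (𝓝[>] (0:ℝ)) (𝓝 1) := by
  have hBp : 0 < Bp := lt_of_lt_of_le hBm hBmp
  have hπ : (0:ℝ) < 2 * Real.pi := mul_pos two_pos Real.pi_pos
  have hm0 : (0:ℝ) < m := lt_trans one_pos hm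
  -- the auxiliary density for the decay estimate
  set w : ℝ → ENNReal := fun x => ENNReal.ofReal (C₁ * (1 + x ^ 2) ^ (-(M / 2))) with hwdef
  have hwcont : Continuous fun x : ℝ => C₁ * (1 + x ^ 2) ^ (-(M / 2)) :=
    continuous_const.mul ((continuous_const.add (continuous_pow 2)).rpow_const
      (fun x => Or.inl (by show (1:ℝ) + x ^ 2 ≠ 0; positivity)))
  have hwmeas : Measurable w := hwcont.measurable.ennreal_ofReal
  set K : ENNReal := ∫⁻ x : ℝ, w x with hKdef
  have hKfin : K ≠ ⊤ := (aux_K_fin (lt_trans hm hMm) hC₁).ne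
  set κ : ℝ := K.toReal with hκdef
  have hκ0 : 0 ≤ κ := ENNReal.toReal_nonneg
  set Ecst : ℝ := (2 * Real.pi)⁻¹ * (4 * Bp * ε + 2 * κ) with hEdef
  have hEcst0 : 0 ≤ Ecst := by positivity
  -- the key quantitative estimates for each fixed lam > 0
  have key : ∀ lam : ℝ, 0 < lam →
      Bm * volN V 0 lam ≤ volNa (fun x ξ => χ (β x) * V (β x) (-ξ)) lam ∧
      |Bp * volN V 0 lam - volNa (fun x ξ => χ (β x) * V (β x) (-ξ)) lam|
        ≤ Ecst * (C₀ / lam) ^ (1 / m) := by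
    intro lam hlam
    set ρ : ℝ := (C₀ / lam) ^ (1 / m) with hρdef
    have hρ : 0 < ρ := Real.rpow_pos_of_pos (div_pos hC₀ hlam) _
    set A : Set (ℝ × ℝ) := {p : ℝ × ℝ | χ p.1 * V p.1 p.2 > lam} with hAdef
    set Ps : Set (ℝ × ℝ) := {p : ℝ × ℝ | V p.1 p.2 > lam ∧ p.1 > 0} with hPdef
    have hAm : MeasurableSet A :=
      measurableSet_lt measurable_const ((hχc.measurable.comp measurable_fst).mul hVmeas)
    have hPm : MeasurableSet Ps :=
      (measurableSet_lt measurable_const hVmeas).inter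
        (measurableSet_lt measurable_const measurable_fst)
    have hVof : ∀ p : ℝ × ℝ, p ∈ A → lam < V p.1 p.2 := fun p hp =>
      lt_of_lt_of_le hp (mul_le_of_le_one_left (hVnn _ _) (hχ01 _).2)
    have hsubPA : Ps ⊆ A := by
      intro p hp
      have h1 : χ p.1 = 1 := hχ1 p.1 (by linarith [hp.2, hε])
      show lam < χ p.1 * V p.1 p.2
      rw [h1, one_mul]; exact hp.1
    have hcoord : ∀ p : ℝ × ℝ, p ∈ A → p.1 ∈ Ioo (-ρ) ρ ∧ p.2 ∈ Ioo (-ρ) ρ := by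
      intro p hp
      have h := aux_sq_lt hC₀ hm0 hlam (lt_of_lt_of_le (hVof p hp) (hVbd _ _))
      exact ⟨aux_mem_Ioo hρ h.1, aux_mem_Ioo hρ h.2⟩
    have hsubA : A ⊆ Ps ∪ (Ioc (-2 * ε) 0) ×ˢ (Ioo (-ρ) ρ) := by
      intro p hp
      rcases lt_or_ge 0 p.1 with hx | hx
      · exact Or.inl ⟨hVof p hp, hx⟩
      · refine Or.inr ⟨⟨?_, hx⟩, (hcoord p hp).2⟩
        by_contra hcon
        push_neg at hcon
        have h0 : χ p.1 = 0 := hχ0 p.1 hcon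
        have : χ p.1 * V p.1 p.2 = 0 := by rw [h0, zero_mul]
        have hp' : lam < χ p.1 * V p.1 p.2 := hp
        linarith
    have hsq : A ⊆ (Ioo (-ρ) ρ) ×ˢ (Ioo (-ρ) ρ) :=
      fun p hp => ⟨(hcoord p hp).1, (hcoord p hp).2⟩
    have hvolIoo : volume (Ioo (-ρ) ρ) = ENNReal.ofReal (2 * ρ) := by
      rw [Real.volume_Ioo]; congr 1; ring
    have hAfin : volume A ≠ ⊤ := by
      refine ne_top_of_le_ne_top ?_ (measure_mono hsq)
      rw [Measure.volume_eq_prod ℝ ℝ, Measure.prod_prod, hvolIoo]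
      exact ENNReal.mul_ne_top ENNReal.ofReal_ne_top ENNReal.ofReal_ne_top
    have hPfin : volume Ps ≠ ⊤ := ne_top_of_le_ne_top hAfin (measure_mono hsubPA)
    -- sections
    set G : ℝ → ENNReal := fun x => volume (Prod.mk x ⁻¹' A) with hGdef
    have hGmeas : Measurable G := measurable_measure_prodMk_left hAm
    have hGle : ∀ x, G x ≤ ENNReal.ofReal (2 * ρ) := by
      intro x
      rw [← hvolIoo]
      exact measure_mono (fun η hη => (hcoord (x, η) hη).2)
    have hvolA_eq : volume A = ∫⁻ x, G x := aux_vol_eq hAm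
    set vQ : ENNReal := volume {p : ℝ × ℝ | χ (β p.1) * V (β p.1) (-p.2) > lam} with hvQdef
    have hQe : vQ = ∫⁻ x, ENNReal.ofReal (B x) * G x :=
      aux_Q_eq hAm hB hBm hbound hb hβ₁
    -- upper bound by Bp
    have hE2 : vQ ≤ ENNReal.ofReal Bp * volume A := by
      rw [hQe, hvolA_eq, ← lintegral_const_mul _ hGmeas]
      refine lintegral_mono_ae (hbound.mono fun t ht => ?_)
      exact mul_le_mul_left (ENNReal.ofReal_le_ofReal ht.2) _
    have hQfin : vQ ≠ ⊤ :=
      ne_top_of_le_ne_top (ENNReal.mul_ne_top ENNReal.ofReal_ne_top hAfin) hE2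
    -- lower bound by Bm
    have hE1 : ENNReal.ofReal Bm * volume A ≤ vQ := by
      rw [hQe, hvolA_eq, ← lintegral_const_mul _ hGmeas]
      refine lintegral_mono_ae (hbound.mono fun t ht => ?_)
      exact mul_le_mul_left (ENNReal.ofReal_le_ofReal ht.1) _
    -- refined lower bound
    have hE3 : ENNReal.ofReal Bp * volume A ≤ vQ + K * ENNReal.ofReal (2 * ρ) := by
      rw [hQe, hvolA_eq, ← lintegral_const_mul _ hGmeas]
      calc ∫⁻ x, ENNReal.ofReal Bp * G x
          ≤ ∫⁻ x, (ENNReal.ofReal (B x) * G x + w x * G x) := by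
            refine lintegral_mono fun x => ?_
            have h1 : ENNReal.ofReal Bp ≤ ENNReal.ofReal (B x) + w x := by
              refine le_trans (ENNReal.ofReal_le_ofReal ?_) ENNReal.ofReal_add_le
              have := hBdecay x; linarith
            calc ENNReal.ofReal Bp * G x
                ≤ (ENNReal.ofReal (B x) + w x) * G x := mul_le_mul_left h1 _
              _ = _ := add_mul _ _ _
        _ = (∫⁻ x, ENNReal.ofReal (B x) * G x) + ∫⁻ x, w x * G x :=
            lintegral_add_left (hB.ennreal_ofReal.mul hGmeas) _
        _ ≤ (∫⁻ x, ENNReal.ofReal (B x) * G x) + K * ENNReal.ofReal (2 * ρ) := by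
            refine add_le_add_right ?_ _
            calc (∫⁻ x, w x * G x) ≤ ∫⁻ x, w x * ENNReal.ofReal (2 * ρ) :=
                lintegral_mono fun x => mul_le_mul_right (hGle x) _
              _ = K * ENNReal.ofReal (2 * ρ) := lintegral_mul_const _ hwmeas
    -- strip bound
    have hE5 : volume A ≤ volume Ps + ENNReal.ofReal (2 * ε) * ENNReal.ofReal (2 * ρ) := by
      calc volume A ≤ volume (Ps ∪ (Ioc (-2 * ε) 0) ×ˢ (Ioo (-ρ) ρ)) := measure_mono hsubA
        _ ≤ volume Ps + volume ((Ioc (-2 * ε) 0) ×ˢ (Ioo (-ρ) ρ)) := measure_union_le _ _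
        _ = _ := by
            rw [Measure.volume_eq_prod ℝ ℝ, Measure.prod_prod, Real.volume_Ioc, hvolIoo]
            congr 2
            ring
    -- real versions
    set pa : ℝ := (volume A).toReal with hpadef
    set pP : ℝ := (volume Ps).toReal with hpPdef
    set q : ℝ := vQ.toReal with hqdef
    have R1 : Bm * pa ≤ q := by
      have := ENNReal.toReal_mono hQfin hE1
      rwa [ENNReal.toReal_mul, ENNReal.toReal_ofReal hBm.le] at this
    have R2 : q ≤ Bp * pa := by
      have := ENNReal.toReal_mono (ENNReal.mul_ne_top ENNReal.ofReal_ne_top hAfin) hE2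
      rwa [ENNReal.toReal_mul, ENNReal.toReal_ofReal hBp.le] at this
    have R3 : Bp * pa ≤ q + κ * (2 * ρ) := by
      have hne : vQ + K * ENNReal.ofReal (2 * ρ) ≠ ⊤ :=
        ENNReal.add_ne_top.mpr ⟨hQfin, ENNReal.mul_ne_top hKfin ENNReal.ofReal_ne_top⟩
      have := ENNReal.toReal_mono hne hE3
      rwa [ENNReal.toReal_mul, ENNReal.toReal_ofReal hBp.le,
        ENNReal.toReal_add hQfin (ENNReal.mul_ne_top hKfin ENNReal.ofReal_ne_top),
        ENNReal.toReal_mul, ENNReal.toReal_ofReal (by positivity : (0:ℝ) ≤ 2 * ρ)] at this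
    have R4 : pP ≤ pa := ENNReal.toReal_mono hAfin (measure_mono hsubPA)
    have R5 : pa ≤ pP + (2 * ε) * (2 * ρ) := by
      have hne : volume Ps + ENNReal.ofReal (2 * ε) * ENNReal.ofReal (2 * ρ) ≠ ⊤ :=
        ENNReal.add_ne_top.mpr ⟨hPfin, ENNReal.mul_ne_top ENNReal.ofReal_ne_top
          ENNReal.ofReal_ne_top⟩
      have := ENNReal.toReal_mono hne hE5
      rwa [ENNReal.toReal_add hPfin (ENNReal.mul_ne_top ENNReal.ofReal_ne_top
        ENNReal.ofReal_ne_top), ENNReal.toReal_mul,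
        ENNReal.toReal_ofReal (by positivity : (0:ℝ) ≤ 2 * ε),
        ENNReal.toReal_ofReal (by positivity : (0:ℝ) ≤ 2 * ρ)] at this
    -- identify volN and volNa
    have hvolN : volN V 0 lam = (2 * Real.pi)⁻¹ * pP := rfl
    have hvolNa : volNa (fun x ξ => χ (β x) * V (β x) (-ξ)) lam = (2 * Real.pi)⁻¹ * q := rfl
    constructor
    · rw [hvolN, hvolNa]
      have h1 : Bm * pP ≤ q := le_trans (mul_le_mul_of_nonneg_left R4 hBm.le) R1
      calc Bm * ((2 * Real.pi)⁻¹ * pP) = (2 * Real.pi)⁻¹ * (Bm * pP) := by ring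
        _ ≤ (2 * Real.pi)⁻¹ * q := by
            exact mul_le_mul_of_nonneg_left h1 (by positivity)
    · rw [hvolN, hvolNa]
      have habs : |Bp * pP - q| ≤ (4 * Bp * ε + 2 * κ) * ρ := by
        rw [abs_le]
        constructor
        · -- q - Bp * pP ≤ stuff, i.e. -(..) ≤ Bp pP - q
          have h1 : q ≤ Bp * pP + Bp * ((2 * ε) * (2 * ρ)) := by
            calc q ≤ Bp * pa := R2
              _ ≤ Bp * (pP + (2 * ε) * (2 * ρ)) := mul_le_mul_of_nonneg_left R5 hBp.le
              _ = _ := by ring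
          nlinarith [mul_nonneg (mul_nonneg hκ0 hε.le) hρ.le, mul_nonneg hκ0 hρ.le]
        · have h2 : Bp * pP ≤ q + κ * (2 * ρ) :=
            le_trans (mul_le_mul_of_nonneg_left R4 hBp.le) R3
          nlinarith [mul_nonneg (mul_nonneg hBp.le hε.le) hρ.le]
      calc |Bp * ((2 * Real.pi)⁻¹ * pP) - (2 * Real.pi)⁻¹ * q|
          = (2 * Real.pi)⁻¹ * |Bp * pP - q| := by
            rw [show Bp * ((2 * Real.pi)⁻¹ * pP) - (2 * Real.pi)⁻¹ * q
              = (2 * Real.pi)⁻¹ * (Bp * pP - q) by ring, abs_mul,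
              abs_of_pos (by positivity : (0:ℝ) < (2 * Real.pi)⁻¹)]
        _ ≤ (2 * Real.pi)⁻¹ * ((4 * Bp * ε + 2 * κ) * ρ) :=
            mul_le_mul_of_nonneg_left habs (by positivity)
        _ = Ecst * ρ := by rw [hEdef]; ring
  -- now the two conclusions
  obtain ⟨c, hc, lam₀, hlam₀, hcl⟩ := hlow
  constructor
  · refine ⟨Bm * c, by positivity, lam₀, hlam₀, fun lam h1 h2 => ?_⟩
    have hk := (key lam h1).1
    have := hcl lam h1 h2
    calc Bm * c * lam ^ (-(2 / m)) = Bm * (c * lam ^ (-(2 / m))) := by ring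
      _ ≤ Bm * volN V 0 lam := mul_le_mul_of_nonneg_left this hBm.le
      _ ≤ _ := hk
  · -- the limit
    set D : ℝ := Ecst / (Bm * c) * C₀ ^ (1 / m) with hDdef
    have htend0 : Tendsto (fun lam : ℝ => lam ^ (1 / m)) (𝓝[>] 0) (𝓝 0) := by
      have h := (Real.continuousAt_rpow_const 0 (1 / m) (Or.inr (by positivity))).tendsto
      rw [Real.zero_rpow (by positivity : (1:ℝ) / m ≠ 0)] at h
      exact h.mono_left nhdsWithin_le_nhds
    have htendg : Tendsto (fun lam : ℝ => D * lam ^ (1 / m)) (𝓝[>] 0) (𝓝 0) := by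
      simpa using htend0.const_mul D
    have hev : ∀ᶠ lam in 𝓝[>] (0:ℝ),
        ‖Bp * volN V 0 lam / volNa (fun x ξ => χ (β x) * V (β x) (-ξ)) lam - 1‖
          ≤ D * lam ^ (1 / m) := by
      filter_upwards [Ioo_mem_nhdsGT_of_mem (Set.mem_Ico.mpr ⟨le_refl (0:ℝ), hlam₀⟩)]
        with lam hmem
      obtain ⟨hk1, hk2⟩ := key lam hmem.1
      set nN := volN V 0 lam
      set nQ := volNa (fun x ξ => χ (β x) * V (β x) (-ξ)) lam
      have hNlow : c * lam ^ (-(2 / m)) ≤ nN := hcl lam hmem.1 hmem.2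
      have hd0 : 0 < Bm * (c * lam ^ (-(2 / m))) :=
        mul_pos hBm (mul_pos hc (Real.rpow_pos_of_pos hmem.1 _))
      have hQlow : Bm * (c * lam ^ (-(2 / m))) ≤ nQ :=
        le_trans (mul_le_mul_of_nonneg_left hNlow hBm.le) hk1
      have hQpos : 0 < nQ := lt_of_lt_of_le hd0 hQlow
      have heq : Bp * nN / nQ - 1 = (Bp * nN - nQ) / nQ := by
        field_simp
      rw [Real.norm_eq_abs, heq, abs_div, abs_of_pos hQpos]
      have step1 : |Bp * nN - nQ| / nQ ≤ (Ecst * (C₀ / lam) ^ (1 / m)) /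
          (Bm * (c * lam ^ (-(2 / m)))) := by
        exact div_le_div₀ (mul_nonneg hEcst0 (Real.rpow_nonneg (div_pos hC₀ hmem.1).le _)) hk2 hd0 hQlow
      refine le_trans step1 (le_of_eq ?_)
      -- algebraic identity
      set s : ℝ := lam ^ (1 / m) with hsdef
      have hs : 0 < s := Real.rpow_pos_of_pos hmem.1 _
      have e1 : lam ^ (-(2 / m)) = (s ^ 2)⁻¹ := by
        rw [Real.rpow_neg hmem.1.le]
        congr 1
        rw [hsdef, ← Real.rpow_natCast (lam ^ ((1:ℝ) / m)) 2,
          ← Real.rpow_mul hmem.1.le]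
        congr 1
        push_cast
        ring
      have e2 : (C₀ / lam) ^ ((1:ℝ) / m) = C₀ ^ ((1:ℝ) / m) / s := by
        rw [Real.div_rpow hC₀.le hmem.1.le, hsdef]
      rw [e1, e2, hDdef]
      field_simp
    have hsub : Tendsto (fun lam : ℝ =>
        Bp * volN V 0 lam / volNa (fun x ξ => χ (β x) * V (β x) (-ξ)) lam - 1)
        (𝓝[>] 0) (𝓝 0) := squeeze_zero_norm' hev htendg
    have := hsub.add_const 1
    simpa using this
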